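/- arXiv:1605.05474 — 3 statements merged into one kernel-verified Lean document; each statement's English description precedes it below -/
import Mathlib

section
/- Let T: H → 2^H be maximal monotone and c > 0. Then every element z of H can be written in exactly one way as z = x + c·y with y ∈ T(x). -/
/-!
For a maximal monotone `T`, the Fitzpatrick function
`F (x, y) = sup {⟪x, b⟫ + ⟪a, y⟫ - ⟪a, b⟫ | b ∈ T a}` is closed and convex, equals `⟪x, y⟫` on the
graph of `T` and dominates it everywhere. By the parallelogram law, minimizing sequences of
`F (x, y) + (‖x‖² + ‖y‖²) / 2` are Cauchy, so it has a minimizer `(x, y)`. The first-order condition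
there makes `(-y, -x)` monotonically related to the graph, hence in it, and testing that point
against itself forces `x + y = 0`. Translating the domain by `z` and scaling `T` by `c` reduce the
general case to this one; uniqueness is monotonicity.
-/

open Filter Topology Set
open scoped RealInnerProductSpace Pointwise

section HalfNormSq

variable {E : Type*} [NormedAddCommGroup E] [InnerProductSpace ℝ E]

/-- On the epigraph of a function `f`, minimizing this minimizes `f + ‖·‖² / 2`. -/
noncomputable def sndAddHalfNormSq (q : E × ℝ) : ℝ := q.2 + ‖q.1‖ ^ 2 / 2

theorem sndAddHalfNormSq_midpoint (q q' : E × ℝ) :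
    sndAddHalfNormSq ((1 / 2 : ℝ) • q + (1 / 2 : ℝ) • q') =
      (sndAddHalfNormSq q + sndAddHalfNormSq q') / 2 - ‖q.1 - q'.1‖ ^ 2 / 8 := by
  simp only [sndAddHalfNormSq, Prod.fst_add, Prod.snd_add, Prod.smul_fst, Prod.smul_snd,
    smul_eq_mul, ← real_inner_self_eq_norm_sq, inner_add_left, inner_add_right, inner_sub_left,
    inner_sub_right, real_inner_smul_left, real_inner_smul_right, real_inner_comm q.1 q'.1]
  ring

theorem sndAddHalfNormSq_add_smul_sub (q₀ q : E × ℝ) (t : ℝ) :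
    sndAddHalfNormSq (q₀ + t • (q - q₀)) = sndAddHalfNormSq q₀ +
      t * (q.2 - q₀.2 + ⟪q₀.1, q.1 - q₀.1⟫) + t ^ 2 * (‖q.1 - q₀.1‖ ^ 2 / 2) := by
  simp only [sndAddHalfNormSq, Prod.fst_add, Prod.snd_add, Prod.smul_fst, Prod.smul_snd,
    Prod.fst_sub, Prod.snd_sub, smul_eq_mul, norm_add_sq_real, norm_smul, real_inner_smul_right,
    mul_pow, Real.norm_eq_abs, sq_abs]
  ring

theorem exists_isMinOn_sndAddHalfNormSq [CompleteSpace E] {C : Set (E × ℝ)} (hne : C.Nonempty)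
    (hC : IsClosed C) (hconv : Convex ℝ C) (hbdd : BddBelow (sndAddHalfNormSq '' C)) :
    ∃ q ∈ C, IsMinOn sndAddHalfNormSq C q := by
  set m := sInf (sndAddHalfNormSq '' C)
  have hm : ∀ q ∈ C, m ≤ sndAddHalfNormSq q := fun q hq => csInf_le hbdd (mem_image_of_mem _ hq)
  obtain ⟨v, -, hv, hvC⟩ := exists_seq_tendsto_sInf (hne.image _) hbdd
  choose q hqC hqv using hvC
  have hgap : ∀ n k, ‖(q n).1 - (q k).1‖ ^ 2 ≤ 4 * ((v n - m) + (v k - m)) := fun n k => by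
    have := hm _ (hconv (hqC n) (hqC k) (a := 1 / 2) (b := 1 / 2) (by norm_num) (by norm_num)
      (by norm_num))
    rw [sndAddHalfNormSq_midpoint, hqv, hqv] at this
    linarith
  have hcauchy : CauchySeq fun n => (q n).1 := by
    rw [cauchySeq_iff_tendsto_dist_atTop_0, ← prod_atTop_atTop_eq]
    have hv' := hv.sub_const m
    rw [sub_self] at hv'
    have hbound := (((hv'.comp tendsto_fst).add (hv'.comp tendsto_snd)).const_mul 4).sqrt
    simp only [add_zero, mul_zero, Real.sqrt_zero] at hbound
    refine squeeze_zero (fun _ => dist_nonneg) (fun nk => ?_) hbound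
    rw [dist_eq_norm, ← abs_norm]
    exact Real.abs_le_sqrt (hgap nk.1 nk.2)
  obtain ⟨p, hp⟩ := cauchySeq_tendsto_of_complete hcauchy
  have hr : Tendsto (fun n => (q n).2) atTop (𝓝 (m - ‖p‖ ^ 2 / 2)) := by
    have hsnd : ∀ n, (q n).2 = v n - ‖(q n).1‖ ^ 2 / 2 := fun n => by
      rw [← hqv, sndAddHalfNormSq]; ring
    simp only [hsnd]
    exact hv.sub ((hp.norm.pow 2).div_const 2)
  refine ⟨(p, m - ‖p‖ ^ 2 / 2), hC.mem_of_tendsto (hp.prodMk_nhds hr) (.of_forall hqC),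
    isMinOn_iff.2 fun q' hq' => ?_⟩
  simpa [sndAddHalfNormSq] using hm q' hq'

theorem IsMinOn.snd_sub_add_inner_nonneg {C : Set (E × ℝ)} (hconv : Convex ℝ C) {q₀ q : E × ℝ}
    (hmin : IsMinOn sndAddHalfNormSq C q₀) (hq₀ : q₀ ∈ C) (hq : q ∈ C) :
    0 ≤ q.2 - q₀.2 + ⟪q₀.1, q.1 - q₀.1⟫ := by
  set B := q.2 - q₀.2 + ⟪q₀.1, q.1 - q₀.1⟫
  set D := ‖q.1 - q₀.1‖ ^ 2 / 2
  have hseg : ∀ t ∈ Ioc (0 : ℝ) 1, 0 ≤ B + t * D := by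
    rintro t ⟨ht₀, ht₁⟩
    have := isMinOn_iff.1 hmin _ (hconv.add_smul_sub_mem hq₀ hq ⟨ht₀.le, ht₁⟩)
    rw [sndAddHalfNormSq_add_smul_sub] at this
    change _ ≤ _ + t * B + t ^ 2 * D at this
    refine (mul_nonneg_iff_of_pos_left ht₀).1 ?_
    linarith
  have hlim : Tendsto (fun t => B + t * D) (𝓝[>] 0) (𝓝 B) := by
    have hcont : Continuous fun t : ℝ => B + t * D := by fun_prop
    simpa using (hcont.tendsto 0).mono_left nhdsWithin_le_nhds
  exact ge_of_tendsto hlim (eventually_of_mem (Ioc_mem_nhdsGT one_pos) hseg)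

end HalfNormSq

section MonotoneOperator

variable {H : Type*} [NormedAddCommGroup H] [InnerProductSpace ℝ H]

def IsMonotoneOperator (T : H → Set H) : Prop :=
  ∀ x x' y y', y ∈ T x → y' ∈ T x' → 0 ≤ ⟪x - x', y - y'⟫

def IsMaximalMonotone (T : H → Set H) : Prop :=
  IsMonotoneOperator T ∧ ∀ x y, (∀ x' y', y' ∈ T x' → 0 ≤ ⟪x - x', y - y'⟫) → y ∈ T x

theorem IsMonotoneOperator.eq_of_add_smul_eq {T : H → Set H} (hT : IsMonotoneOperator T)
    {c : ℝ} (hc : 0 < c) {x x' y y' : H} (hy : y ∈ T x) (hy' : y' ∈ T x')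
    (h : x + c • y = x' + c • y') : x = x' ∧ y = y' := by
  have hx : x - x' = c • (y' - y) := by
    rw [smul_sub]; linear_combination (norm := module) h
  have hmono := hT x x' y y' hy hy'
  rw [hx, real_inner_smul_left, ← neg_sub y y', inner_neg_left, real_inner_self_eq_norm_sq]
    at hmono
  have hyy : ‖y - y'‖ ^ 2 = 0 := le_antisymm (by nlinarith) (sq_nonneg _)
  obtain rfl : y = y' := by simpa [sub_eq_zero] using hyy
  simpa [sub_eq_zero] using hx

theorem IsMaximalMonotone.exists_mem {T : H → Set H} (hT : IsMaximalMonotone T) :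
    ∃ a b, b ∈ T a := by
  by_contra! h
  exact h 0 0 (hT.2 0 0 fun a b hb => absurd hb (h a b))

theorem IsMaximalMonotone.comp_add_right {T : H → Set H} (hT : IsMaximalMonotone T) (z : H) :
    IsMaximalMonotone fun x => T (x + z) := by
  refine ⟨fun x x' y y' hy hy' => by simpa using hT.1 _ _ y y' hy hy', fun x y h => ?_⟩
  refine hT.2 _ _ fun x' y' hy' => ?_
  rw [← sub_sub_eq_add_sub]
  exact h (x' - z) y' (by simpa using hy')

theorem IsMaximalMonotone.smul {T : H → Set H} (hT : IsMaximalMonotone T) {c : ℝ} (hc : 0 < c) :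
    IsMaximalMonotone fun x => c • T x := by
  refine ⟨?_, fun x y h => ⟨c⁻¹ • y, hT.2 _ _ fun x' y' hy' => ?_, smul_inv_smul₀ hc.ne' y⟩⟩
  · rintro x x' _ _ ⟨y, hy, rfl⟩ ⟨y', hy', rfl⟩
    rw [← smul_sub, real_inner_smul_right]
    exact mul_nonneg hc.le (hT.1 x x' y y' hy hy')
  · have := h x' (c • y') (smul_mem_smul_set hy')
    rwa [← inv_smul_smul₀ hc.ne' y', ← smul_sub, real_inner_smul_right,
      mul_nonneg_iff_of_pos_left (inv_pos.2 hc)]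

def fitzpatrickEpigraph (T : H → Set H) : Set (WithLp 2 (H × H) × ℝ) :=
  {q | ∀ a b, b ∈ T a → ⟪q.1.fst, b⟫ + ⟪a, q.1.snd⟫ - ⟪a, b⟫ ≤ q.2}

theorem isClosed_fitzpatrickEpigraph (T : H → Set H) : IsClosed (fitzpatrickEpigraph T) := by
  simp only [fitzpatrickEpigraph, ofPred_forall]
  refine isClosed_iInter fun a => isClosed_iInter fun b => isClosed_iInter fun _ => ?_
  exact isClosed_le (by fun_prop) continuous_snd

theorem convex_fitzpatrickEpigraph (T : H → Set H) : Convex ℝ (fitzpatrickEpigraph T) := by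
  intro q hq q' hq' s t hs ht hst a b hb
  have h := hq a b hb
  have h' := hq' a b hb
  simp only [Prod.fst_add, Prod.snd_add, Prod.smul_fst, Prod.smul_snd, WithLp.add_fst,
    WithLp.add_snd, WithLp.smul_fst, WithLp.smul_snd, inner_add_left, inner_add_right,
    real_inner_smul_left, real_inner_smul_right, smul_eq_mul]
  linear_combination s * h + t * h' + ⟪a, b⟫ * hst

theorem IsMonotoneOperator.mem_fitzpatrickEpigraph {T : H → Set H} (hT : IsMonotoneOperator T)
    {a b : H} (hb : b ∈ T a) : (WithLp.toLp 2 (a, b), ⟪a, b⟫) ∈ fitzpatrickEpigraph T := by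
  intro a' b' hb'
  have := hT a a' b b' hb hb'
  simp only [inner_sub_left, inner_sub_right] at this
  simp only [WithLp.toLp_fst, WithLp.toLp_snd]
  linarith

theorem IsMaximalMonotone.inner_le_of_mem_fitzpatrickEpigraph {T : H → Set H}
    (hT : IsMaximalMonotone T) {q : WithLp 2 (H × H) × ℝ} (hq : q ∈ fitzpatrickEpigraph T) :
    ⟪q.1.fst, q.1.snd⟫ ≤ q.2 := by
  by_contra! hlt
  have hmem : q.1.snd ∈ T q.1.fst := hT.2 _ _ fun a b hb => by
    have := hq a b hb
    simp only [inner_sub_left, inner_sub_right]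
    linarith
  have := hq _ _ hmem
  linarith

theorem IsMaximalMonotone.sndAddHalfNormSq_nonneg {T : H → Set H} (hT : IsMaximalMonotone T)
    {q : WithLp 2 (H × H) × ℝ} (hq : q ∈ fitzpatrickEpigraph T) : 0 ≤ sndAddHalfNormSq q := by
  have := hT.inner_le_of_mem_fitzpatrickEpigraph hq
  have := WithLp.prod_norm_sq_eq_of_L2 q.1
  have := norm_add_sq_real q.1.fst q.1.snd
  simp only [sndAddHalfNormSq]
  nlinarith [sq_nonneg ‖q.1.fst + q.1.snd‖]

theorem IsMaximalMonotone.exists_forall_norm_add_sq_le_inner [CompleteSpace H] {T : H → Set H}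
    (hT : IsMaximalMonotone T) : ∃ x y, ∀ a b, b ∈ T a → ‖x + y‖ ^ 2 ≤ ⟪a + y, b + x⟫ := by
  obtain ⟨a₀, b₀, hb₀⟩ := hT.exists_mem
  obtain ⟨q₀, hq₀, hmin⟩ := exists_isMinOn_sndAddHalfNormSq
    ⟨_, hT.1.mem_fitzpatrickEpigraph hb₀⟩ (isClosed_fitzpatrickEpigraph T)
    (convex_fitzpatrickEpigraph T) ⟨0, forall_mem_image.2 fun _ => hT.sndAddHalfNormSq_nonneg⟩
  set x := q₀.1.fst
  set y := q₀.1.snd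
  refine ⟨x, y, fun a b hb => ?_⟩
  have hvar := hmin.snd_sub_add_inner_nonneg (convex_fitzpatrickEpigraph T) hq₀
    (hT.1.mem_fitzpatrickEpigraph hb)
  -- `⟪a + y, b + x⟫ - ‖x + y‖²` is `hvar`'s right-hand side plus `q₀.2 - ⟪x, y⟫ ≥ 0`.
  have hlow := hT.inner_le_of_mem_fitzpatrickEpigraph hq₀
  simp only [WithLp.prod_inner_apply, WithLp.ofLp_fst, WithLp.ofLp_snd, WithLp.sub_fst,
    WithLp.sub_snd, WithLp.toLp_fst, WithLp.toLp_snd] at hvar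
  simp only [← real_inner_self_eq_norm_sq, inner_add_left, inner_add_right, inner_sub_right]
    at hvar ⊢
  rw [real_inner_comm x y, real_inner_comm a x] at *
  linarith

theorem IsMaximalMonotone.exists_add_eq_zero [CompleteSpace H] {T : H → Set H}
    (hT : IsMaximalMonotone T) : ∃ x y, y ∈ T x ∧ x + y = 0 := by
  obtain ⟨x, y, h⟩ := hT.exists_forall_norm_add_sq_le_inner
  have hmem : -x ∈ T (-y) := hT.2 _ _ fun a b hb => by
    rw [← neg_add', ← neg_add', inner_neg_neg, add_comm y, add_comm x]
    exact (sq_nonneg _).trans (h a b hb)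
  have hsq : ‖x + y‖ ^ 2 ≤ 0 := by simpa using h _ _ hmem
  have hxy : x + y = 0 := by simpa using le_antisymm hsq (sq_nonneg _)
  exact ⟨-y, -x, hmem, by rw [← neg_add, add_comm, hxy, neg_zero]⟩

end MonotoneOperator

/-- Representation lemma (Minty): for maximal monotone T and c > 0, every z ∈ H can be written
in exactly one way as z = x + c • y with y ∈ T x. -/
theorem representation_lemma_maximal
    {H : Type*} [NormedAddCommGroup H] [InnerProductSpace ℝ H] [CompleteSpace H]
    (T : H → Set H)
    (hmono : ∀ z z' w w', w ∈ T z → w' ∈ T z' → 0 ≤ (inner ℝ (z - z') (w - w') : ℝ))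
    (hmax : ∀ z w, (∀ z' w', w' ∈ T z' → 0 ≤ (inner ℝ (z - z') (w - w') : ℝ)) → w ∈ T z)
    (c : ℝ) (hc : 0 < c) :
    ∀ z : H, ∃! p : H × H, p.2 ∈ T p.1 ∧ z = p.1 + c • p.2 := by
  intro z
  have hT : IsMaximalMonotone T := ⟨hmono, hmax⟩
  obtain ⟨u, _, ⟨y, hy, rfl⟩, hu⟩ := ((hT.comp_add_right z).smul hc).exists_add_eq_zero
  have hz : z = u + z + c • y := by rw [add_right_comm, hu, zero_add]
  refine ⟨(u + z, y), ⟨hy, hz⟩, fun ⟨x', y'⟩ ⟨hy', hz'⟩ => ?_⟩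
  obtain ⟨rfl, rfl⟩ := hT.1.eq_of_add_smul_eq hc hy' hy (hz'.symm.trans hz)
  rfl
end

section
/- Let T: H → 2^H be maximal monotone with T^{-1}(0) = {z*}, and suppose T^{-1} is Lipschitz continuous at 0 with modulus a > 0: there is τ > 0 such that ‖z − z*‖ ≤ a‖w‖ whenever z ∈ T^{-1}(w) and ‖w‖ ≤ τ. Then for c > 0 and any z ∈ H with ‖c^{-1}(z − J_{cT}(z))‖ ≤ τ, it holds that ‖J_{cT}(z) − z*‖ ≤ (a/√(a² + c²)) ‖z − z*‖. -/
/-! Write `w = c⁻¹ (z - J z)`, so that `z - z* = (J z - z*) + c w` with `w ∈ T (J z)` and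
`0 ∈ T z*`. Monotonicity makes the cross term `⟪J z - z*, w⟫` nonnegative, hence
`‖z - z*‖² ≥ ‖J z - z*‖² + c² ‖w‖²`, and the Lipschitz bound `‖J z - z*‖ ≤ a ‖w‖` turns this into
`(a² + c²) ‖J z - z*‖² ≤ a² ‖z - z*‖²`. -/

section InnerProductSpace

variable {E : Type*} [SeminormedAddCommGroup E] [InnerProductSpace ℝ E]

theorem sq_add_sq_mul_norm_sq_le_of_inner_nonneg {u w : E} {a c : ℝ} (hc : 0 ≤ c)
    (hinner : 0 ≤ inner ℝ u w) (hu : ‖u‖ ≤ a * ‖w‖) :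
    (a ^ 2 + c ^ 2) * ‖u‖ ^ 2 ≤ a ^ 2 * ‖u + c • w‖ ^ 2 := by
  have hexpand : ‖u + c • w‖ ^ 2 = ‖u‖ ^ 2 + 2 * c * inner ℝ u w + c ^ 2 * ‖w‖ ^ 2 := by
    rw [norm_add_sq_real, real_inner_smul_right, norm_smul, Real.norm_of_nonneg hc]
    ring
  have hu_sq : ‖u‖ ^ 2 ≤ a ^ 2 * ‖w‖ ^ 2 := by
    rw [← mul_pow]
    exact pow_le_pow_left₀ (norm_nonneg u) hu 2
  have hcross : 0 ≤ a ^ 2 * (2 * c * inner ℝ u w) := by positivity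
  rw [hexpand]
  linarith [mul_le_mul_of_nonneg_left hu_sq (sq_nonneg c)]

theorem norm_le_div_sqrt_mul_norm_add_smul_of_inner_nonneg {u w : E} {a c : ℝ} (ha : 0 < a)
    (hc : 0 ≤ c) (hinner : 0 ≤ inner ℝ u w) (hu : ‖u‖ ≤ a * ‖w‖) :
    ‖u‖ ≤ a / Real.sqrt (a ^ 2 + c ^ 2) * ‖u + c • w‖ := by
  have hs : 0 < a ^ 2 + c ^ 2 := by positivity
  rw [div_mul_eq_mul_div, le_div_iff₀ (Real.sqrt_pos.mpr hs),
    ← pow_le_pow_iff_left₀ (by positivity) (by positivity) two_ne_zero,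
    mul_pow, mul_pow, Real.sq_sqrt hs.le, mul_comm]
  exact sq_add_sq_mul_norm_sq_le_of_inner_nonneg hc hinner hu

end InnerProductSpace

theorem resolvent_contraction_of_inv_lipschitz_general
    {H : Type*} [NormedAddCommGroup H] [InnerProductSpace ℝ H]
    (T : H → Set H)
    (hmono : ∀ z z' w w', w ∈ T z → w' ∈ T z' → 0 ≤ (inner ℝ (z - z') (w - w') : ℝ))
    (zstar : H) (hzstar : (0 : H) ∈ T zstar)
    (a τ : ℝ) (ha : 0 < a)
    (hlip : ∀ z w, w ∈ T z → ‖w‖ ≤ τ → ‖z - zstar‖ ≤ a * ‖w‖)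
    (c : ℝ) (hc : 0 < c)
    (J : H → H) (hJ : ∀ z, c⁻¹ • (z - J z) ∈ T (J z)) :
    ∀ z : H, ‖c⁻¹ • (z - J z)‖ ≤ τ →
      ‖J z - zstar‖ ≤ a / Real.sqrt (a ^ 2 + c ^ 2) * ‖z - zstar‖ := by
  intro z hz
  set w := c⁻¹ • (z - J z)
  have hdecomp : z - zstar = (J z - zstar) + c • w := by
    rw [smul_inv_smul₀ hc.ne']
    abel
  have hinner : 0 ≤ inner ℝ (J z - zstar) w := by
    simpa using hmono (J z) zstar w 0 (hJ z) hzstar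
  rw [hdecomp]
  exact norm_le_div_sqrt_mul_norm_add_smul_of_inner_nonneg ha hc.le hinner (hlip (J z) w (hJ z) hz)

/-- Lemma 3.1: If T⁻¹ is Lipschitz continuous at 0 with modulus a, then the resolvent satisfies
a sharp contraction bound toward the unique zero z*. -/
theorem resolvent_contraction_of_inv_lipschitz
    {H : Type*} [NormedAddCommGroup H] [InnerProductSpace ℝ H]
    (T : H → Set H)
    (hmono : ∀ z z' w w', w ∈ T z → w' ∈ T z' → 0 ≤ (inner ℝ (z - z') (w - w') : ℝ))
    (hmax : ∀ z w, (∀ z' w', w' ∈ T z' → 0 ≤ (inner ℝ (z - z') (w - w') : ℝ)) → w ∈ T z)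
    (zstar : H) (hzstar : (0 : H) ∈ T zstar)
    (huniq : ∀ z, (0 : H) ∈ T z → z = zstar)
    (a τ : ℝ) (ha : 0 < a) (hτ : 0 < τ)
    (hlip : ∀ z w, w ∈ T z → ‖w‖ ≤ τ → ‖z - zstar‖ ≤ a * ‖w‖)
    (c : ℝ) (hc : 0 < c)
    (J : H → H) (hJ : ∀ z, c⁻¹ • (z - J z) ∈ T (J z)) :
    ∀ z : H, ‖c⁻¹ • (z - J z)‖ ≤ τ →
      ‖J z - zstar‖ ≤ a / Real.sqrt (a ^ 2 + c ^ 2) * ‖z - zstar‖ :=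
  resolvent_contraction_of_inv_lipschitz_general T hmono zstar hzstar a τ ha hlip c hc J hJ
end

section
/- Let T be maximal monotone with zero z*, suppose there exist a > 0, τ > 0 with ‖J_{cT}(z) − z*‖ ≤ (a/√(a²+c²))‖z − z*‖ whenever ‖c^{-1}(z − J_{cT}(z))‖ ≤ τ. Let γ ∈ (0,2), c ≥ κ > 0, and suppose z satisfies ‖c^{-1}(z − J_{cT}(z))‖ ≤ τ. Then z⁺ := z − γ(z − J_{cT}(z)) satisfies ‖z⁺ − z*‖² ≤ ϱ‖z − z*‖² with ϱ = 1 − min(γ, 2γ − γ²)·c²/(a² + c²), and 0 < ϱ < 1. -/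
/-!
Write `z - z* = y + u` with `y = J z - z*` and `u = z - J z`, so that `z⁺ - z* = y + (1 - γ) u`.
Monotonicity of `T` at the pairs `(J z, u / c)` and `(z*, 0)` gives `⟪y, u⟫ ≥ 0`. Then
`‖y + (1 - γ) u‖²` is at most the combination `(1 - m) ‖y + u‖² + m ‖y‖²` with
`m = min γ (2γ - γ²)`: for `γ ≤ 1` this is convexity of `‖·‖²`, for `γ ≥ 1` it uses `⟪y, u⟫ ≥ 0`.
The error bound `‖y‖² ≤ a² / (a² + c²) ‖z - z*‖²` finishes the estimate.
-/

section InnerProduct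

variable {E : Type*} [NormedAddCommGroup E] [InnerProductSpace ℝ E]

theorem norm_add_smul_sq_real (y u : E) (t : ℝ) :
    ‖y + t • u‖ ^ 2 = ‖y‖ ^ 2 + 2 * t * inner ℝ y u + t ^ 2 * ‖u‖ ^ 2 := by
  rw [norm_add_sq_real, real_inner_smul_right, norm_smul, Real.norm_eq_abs, mul_pow, sq_abs]
  ring

theorem norm_add_one_sub_smul_sq_le {y u : E} (h : 0 ≤ inner ℝ y u) {γ : ℝ} (hγ : 0 ≤ γ) :
    ‖y + (1 - γ) • u‖ ^ 2 ≤
      (1 - min γ (2 * γ - γ ^ 2)) * ‖y + u‖ ^ 2 + min γ (2 * γ - γ ^ 2) * ‖y‖ ^ 2 := by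
  have hyu := norm_add_smul_sq_real y u 1
  rw [one_smul] at hyu
  rw [norm_add_smul_sq_real, hyu]
  rcases le_total γ 1 with hγ1 | hγ1
  · rw [min_eq_left (by nlinarith)]
    nlinarith [mul_nonneg (mul_nonneg hγ (sub_nonneg.mpr hγ1)) (sq_nonneg ‖u‖)]
  · rw [min_eq_right (by nlinarith)]
    nlinarith [mul_nonneg (mul_nonneg (zero_le_one.trans hγ1) (sub_nonneg.mpr hγ1)) h]

end InnerProduct

theorem inner_resolvent_sub_nonneg {H : Type*} [NormedAddCommGroup H] [InnerProductSpace ℝ H]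
    {T : H → Set H}
    (hmono : ∀ z z' w w', w ∈ T z → w' ∈ T z' → 0 ≤ (inner ℝ (z - z') (w - w') : ℝ))
    {c : ℝ} (hc : 0 < c) {z x zstar : H} (hx : c⁻¹ • (z - x) ∈ T x) (hzstar : (0 : H) ∈ T zstar) :
    0 ≤ inner ℝ (x - zstar) (z - x) := by
  have h := hmono x zstar _ 0 hx hzstar
  rw [sub_zero, real_inner_smul_right] at h
  exact nonneg_of_mul_nonneg_right (by linarith) (inv_pos.mpr hc)

theorem sq_le_div_mul_sq_of_le_div_sqrt {a c A B : ℝ} (hac : 0 < a ^ 2 + c ^ 2) (hB : 0 ≤ B)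
    (h : B ≤ a / Real.sqrt (a ^ 2 + c ^ 2) * A) :
    B ^ 2 ≤ a ^ 2 / (a ^ 2 + c ^ 2) * A ^ 2 := by
  calc B ^ 2 ≤ (a / Real.sqrt (a ^ 2 + c ^ 2) * A) ^ 2 := pow_le_pow_left₀ hB h 2
    _ = a ^ 2 / (a ^ 2 + c ^ 2) * A ^ 2 := by rw [mul_pow, div_pow, Real.sq_sqrt hac.le]

theorem min_relaxation_mem_Ioc {γ : ℝ} (hγ : γ ∈ Set.Ioo (0 : ℝ) 2) :
    min γ (2 * γ - γ ^ 2) ∈ Set.Ioc (0 : ℝ) 1 := by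
  obtain ⟨hγ0, hγ2⟩ := hγ
  exact ⟨lt_min hγ0 (by nlinarith), (min_le_right _ _).trans (by nlinarith [sq_nonneg (γ - 1)])⟩

theorem generalized_ppa_linear_rate_general
    {H : Type*} [NormedAddCommGroup H] [InnerProductSpace ℝ H]
    (T : H → Set H)
    (hmono : ∀ z z' w w', w ∈ T z → w' ∈ T z' → 0 ≤ (inner ℝ (z - z') (w - w') : ℝ))
    (zstar : H) (hzstar : (0 : H) ∈ T zstar)
    (a τ : ℝ) (ha : 0 < a)
    (c κ : ℝ) (hκ : 0 < κ) (hcκ : κ ≤ c)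
    (J : H → H) (hJ : ∀ z, c⁻¹ • (z - J z) ∈ T (J z))
    (hres : ∀ z : H, ‖c⁻¹ • (z - J z)‖ ≤ τ →
      ‖J z - zstar‖ ≤ a / Real.sqrt (a ^ 2 + c ^ 2) * ‖z - zstar‖)
    (γ : ℝ) (hγ : γ ∈ Set.Ioo (0 : ℝ) 2)
    (z : H) (hz : ‖c⁻¹ • (z - J z)‖ ≤ τ) :
    ‖(z - γ • (z - J z)) - zstar‖ ^ 2 ≤
      (1 - min γ (2 * γ - γ ^ 2) * (c ^ 2 / (a ^ 2 + c ^ 2))) * ‖z - zstar‖ ^ 2 ∧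
    0 < 1 - min γ (2 * γ - γ ^ 2) * (c ^ 2 / (a ^ 2 + c ^ 2)) ∧
    1 - min γ (2 * γ - γ ^ 2) * (c ^ 2 / (a ^ 2 + c ^ 2)) < 1 := by
  have hc : 0 < c := hκ.trans_le hcκ
  have hac : 0 < a ^ 2 + c ^ 2 := by positivity
  obtain ⟨hm0, hm1⟩ := min_relaxation_mem_Ioc hγ
  set m := min γ (2 * γ - γ ^ 2)
  have hstep := norm_add_one_sub_smul_sq_le
    (inner_resolvent_sub_nonneg hmono hc (hJ z) hzstar) hγ.1.le
  rw [show J z - zstar + (1 - γ) • (z - J z) = z - γ • (z - J z) - zstar by module,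
    show J z - zstar + (z - J z) = z - zstar by abel] at hstep
  have herr := sq_le_div_mul_sq_of_le_div_sqrt hac (norm_nonneg _) (hres z hz)
  have hq0 : 0 < c ^ 2 / (a ^ 2 + c ^ 2) := by positivity
  have hq1 : c ^ 2 / (a ^ 2 + c ^ 2) = 1 - a ^ 2 / (a ^ 2 + c ^ 2) := by field_simp; ring
  have hs0 : 0 < a ^ 2 / (a ^ 2 + c ^ 2) := by positivity
  refine ⟨?_, by nlinarith, by nlinarith⟩
  calc ‖z - γ • (z - J z) - zstar‖ ^ 2
      ≤ (1 - m) * ‖z - zstar‖ ^ 2 + m * ‖J z - zstar‖ ^ 2 := hstep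
    _ ≤ (1 - m) * ‖z - zstar‖ ^ 2 + m * (a ^ 2 / (a ^ 2 + c ^ 2) * ‖z - zstar‖ ^ 2) := by
      gcongr
    _ = (1 - m * (c ^ 2 / (a ^ 2 + c ^ 2))) * ‖z - zstar‖ ^ 2 := by rw [hq1]; ring

/-- One-step optimal linear contraction of the generalized PPA. -/
theorem generalized_ppa_linear_rate
    {H : Type*} [NormedAddCommGroup H] [InnerProductSpace ℝ H]
    (T : H → Set H)
    (hmono : ∀ z z' w w', w ∈ T z → w' ∈ T z' → 0 ≤ (inner ℝ (z - z') (w - w') : ℝ))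
    (hmax : ∀ z w, (∀ z' w', w' ∈ T z' → 0 ≤ (inner ℝ (z - z') (w - w') : ℝ)) → w ∈ T z)
    (zstar : H) (hzstar : (0 : H) ∈ T zstar)
    (a τ : ℝ) (ha : 0 < a) (hτ : 0 < τ)
    (c κ : ℝ) (hκ : 0 < κ) (hcκ : κ ≤ c)
    (J : H → H) (hJ : ∀ z, c⁻¹ • (z - J z) ∈ T (J z))
    (hres : ∀ z : H, ‖c⁻¹ • (z - J z)‖ ≤ τ →
      ‖J z - zstar‖ ≤ a / Real.sqrt (a ^ 2 + c ^ 2) * ‖z - zstar‖)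
    (γ : ℝ) (hγ : γ ∈ Set.Ioo (0 : ℝ) 2)
    (z : H) (hz : ‖c⁻¹ • (z - J z)‖ ≤ τ) :
    ‖(z - γ • (z - J z)) - zstar‖ ^ 2 ≤
      (1 - min γ (2 * γ - γ ^ 2) * (c ^ 2 / (a ^ 2 + c ^ 2))) * ‖z - zstar‖ ^ 2 ∧
    0 < 1 - min γ (2 * γ - γ ^ 2) * (c ^ 2 / (a ^ 2 + c ^ 2)) ∧
    1 - min γ (2 * γ - γ ^ 2) * (c ^ 2 / (a ^ 2 + c ^ 2)) < 1 :=
  generalized_ppa_linear_rate_general T hmono zstar hzstar a τ ha c κ hκ hcκ J hJ hres γ hγ z hz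
end
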